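/- Two automorphisms g, g' ∈ Aut(T) are conjugate in Aut(T) if and only if the tree compositions φ^g ∈ C(T,P^g) and φ^{g'} ∈ C(T,P^{g'}) are equivalent. -/

import Mathlib

open Function

structure FRTree : Type 1 where
  V : Type
  [fintypeV : Fintype V]
  [decEqV : DecidableEq V]
  root : V
  parent : V → V
  parent_root : parent root = root
  reaches_root : ∀ v : V, ∃ n : ℕ, parent^[n] v = root

attribute [instance] FRTree.fintypeV FRTree.decEqV

namespace FRTree

/-- `w` is a child of `u`. -/
def IsChild (T : FRTree) (w u : T.V) : Prop := w ≠ T.root ∧ T.parent w = u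

instance (T : FRTree) (w u : T.V) : Decidable (T.IsChild w u) :=
  inferInstanceAs (Decidable (w ≠ T.root ∧ T.parent w = u))

/-- A vertex is internal if it has at least one child. -/
def Internal (T : FRTree) (u : T.V) : Prop := ∃ w, T.IsChild w u

/-- A leaf is a vertex without children. -/
def IsLeaf (T : FRTree) (u : T.V) : Prop := ¬ T.Internal u

/-- Two (non-root) vertices are siblings if they have the same parent. -/
def Siblings (T : FRTree) (u v : T.V) : Prop :=
  u ≠ T.root ∧ v ≠ T.root ∧ T.parent u = T.parent v

/-- The set of vertices of the subtree `T_u`:  `u` together with all of its descendants. -/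
def Desc (T : FRTree) (u : T.V) : Set T.V := {v | ∃ n : ℕ, T.parent^[n] v = u}

/-- First level vertices. -/
def FirstLevel (T : FRTree) (v : T.V) : Prop := v ≠ T.root ∧ T.parent v = T.root

/-- The children of a vertex, as a finset. -/
def children (T : FRTree) (u : T.V) : Finset T.V :=
  Finset.univ.filter (fun w => T.IsChild w u)

end FRTree

open FRTree

/-- Rooted tree homomorphism: sends root to root, non-root vertices to non-root
vertices and commutes with taking the parent.  (This is the same as a graph
homomorphism between the underlying trees sending root to root.) -/
def IsHom (T P : FRTree) (φ : T.V → P.V) : Prop :=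
  φ T.root = P.root ∧
  ∀ v : T.V, v ≠ T.root → φ v ≠ P.root ∧ P.parent (φ v) = φ (T.parent v)

/-- Isomorphism of rooted trees. -/
def IsIsom (T P : FRTree) (φ : T.V → P.V) : Prop :=
  IsHom T P φ ∧ Function.Bijective φ

/-- The automorphism group of a rooted tree, as a subgroup of the permutations of the vertices. -/
def FRTree.Aut (T : FRTree) : Subgroup (Equiv.Perm T.V) where
  carrier := {g : Equiv.Perm T.V | IsHom T T ⇑g}
  one_mem' := ⟨rfl, fun v hv => ⟨hv, rfl⟩⟩
  mul_mem' := by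
    rintro a b ⟨ha0, ha⟩ ⟨hb0, hb⟩
    refine ⟨?_, fun v hv => ?_⟩
    · simp only [Equiv.Perm.coe_mul, Function.comp_apply, hb0, ha0]
    · obtain ⟨hb1, hb2⟩ := hb v hv
      obtain ⟨ha1, ha2⟩ := ha (b v) hb1
      refine ⟨by simpa using ha1, ?_⟩
      simp only [Equiv.Perm.coe_mul, Function.comp_apply]
      rw [ha2, hb2]
  inv_mem' := by
    rintro a ⟨ha0, ha⟩
    refine ⟨a.injective (by simp [ha0]), fun v hv => ?_⟩
    have h1 : a⁻¹ v ≠ T.root := by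
      intro h
      apply hv
      have h2 := congrArg a h
      rwa [← Equiv.Perm.mul_apply, mul_inv_cancel, Equiv.Perm.one_apply, ha0] at h2
    obtain ⟨_, h3⟩ := ha (a⁻¹ v) h1
    rw [← Equiv.Perm.mul_apply, mul_inv_cancel, Equiv.Perm.one_apply] at h3
    exact ⟨h1, a.injective (by rw [← h3, ← Equiv.Perm.mul_apply, mul_inv_cancel, Equiv.Perm.one_apply])⟩

/-- `τ` restricts to an isomorphism from the subtree `T_u` onto the subtree `T'_{u'}`.
(The values of `τ` outside of `T_u` are irrelevant.) -/
def IsSubtreeIso (T T' : FRTree) (u : T.V) (u' : T'.V) (τ : T.V → T'.V) : Prop :=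
  τ u = u' ∧ Set.BijOn τ (T.Desc u) (T'.Desc u') ∧
  ∀ w ∈ T.Desc u, w ≠ u → τ w ≠ u' ∧ T'.parent (τ w) = τ (T.parent w)

/-- A tree composition (`P`-composition of `T`): a surjective rooted tree homomorphism
satisfying the regularity condition. -/
def IsComposition (T P : FRTree) (φ : T.V → P.V) : Prop :=
  IsHom T P φ ∧ Function.Surjective φ ∧
  ∀ u v : T.V, u ≠ v → T.Internal u → T.Internal v → T.Siblings u v → φ u = φ v →
    ∃ g ∈ T.Aut, g u = v ∧ ∀ w ∈ T.Desc u, φ (g w) = φ w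
/-- Equivalence of the restrictions `φ_u : T_u → P_{φ u}` and `ψ_{u'} : T'_{u'} → P'_{ψ u'}`
of two tree compositions. -/
def RestrEquiv (T P T' P' : FRTree) (φ : T.V → P.V) (ψ : T'.V → P'.V)
    (u : T.V) (u' : T'.V) : Prop :=
  ∃ (τ : T.V → T'.V) (ω : P.V → P'.V),
    IsSubtreeIso T T' u u' τ ∧ IsSubtreeIso P P' (φ u) (ψ u') ω ∧
    ∀ w ∈ T.Desc u, ω (φ w) = ψ (τ w)

/-- Strict equivalence of the restrictions `δ_u : T_u → Q_{δ u}` and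
`δ'_{u'} : T'_{u'} → Q_{δ' u'}` of two maps into the same tree `Q`
(the isomorphism on the target side is the identity). -/
def RestrStrictEquiv (T Q T' : FRTree) (δ : T.V → Q.V) (δ' : T'.V → Q.V)
    (u : T.V) (u' : T'.V) : Prop :=
  δ u = δ' u' ∧ ∃ τ : T.V → T'.V, IsSubtreeIso T T' u u' τ ∧
    ∀ w ∈ T.Desc u, δ' (τ w) = δ w

/-- Equivalence of tree compositions. -/
def CompEquiv (T P T' P' : FRTree) (φ : T.V → P.V) (ψ : T'.V → P'.V) : Prop :=
  ∃ (τ : T.V → T'.V) (ω : P.V → P'.V),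
    IsIsom T T' τ ∧ IsIsom P P' ω ∧ ω ∘ φ = ψ ∘ τ

/-- Strict equivalence of tree compositions with the same target tree. -/
def StrictEquiv (T T' P : FRTree) (φ : T.V → P.V) (ψ : T'.V → P.V) : Prop :=
  ∃ τ : T.V → T'.V, IsIsom T T' τ ∧ ψ ∘ τ = φ

/-- `α : P → Q` is the quotient of the tree composition `φ : T → P`. -/
def IsQuotient (T P Q : FRTree) (φ : T.V → P.V) (α : P.V → Q.V) : Prop :=
  IsComposition P Q α ∧
  -- (a) for every internal `x ∈ P`, all children of `x` which are leaves are sent by `α`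
  -- to a single vertex, which is the unique child of `α x` that is a leaf
  (∀ x : P.V, P.Internal x → ∀ y y' : P.V, P.IsChild y x → P.IsLeaf y →
    P.IsChild y' x → P.IsLeaf y' → α y = α y') ∧
  (∀ x y : P.V, P.Internal x → P.IsChild y x → P.IsLeaf y →
    Q.IsChild (α y) (α x) ∧ Q.IsLeaf (α y) ∧
      ∀ z : Q.V, Q.IsChild z (α x) → Q.IsLeaf z → z = α y) ∧
  -- (b) distinct internal siblings of `Q` separate inequivalent restrictions of `φ`
  (∀ a b : Q.V, a ≠ b → Q.Internal a → Q.Internal b → Q.Siblings a b →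
    ∀ u v : T.V, α (φ u) = a → α (φ v) = b → ¬ RestrEquiv T P T P φ φ u v) ∧
  -- (c) vertices with the same image under `α ∘ φ` have equivalent restrictions of `φ`,
  -- and strictly equivalent restrictions of `α ∘ φ`
  (∀ u w : T.V, T.Internal u → T.Internal w → α (φ u) = α (φ w) →
    RestrEquiv T P T P φ φ u w ∧ RestrStrictEquiv T Q T (α ∘ φ) (α ∘ φ) u w)

/-- The type `|φ⁻¹|` of a tree composition: `|φ⁻¹|(root) = 0` and, for `y` non-root with
parent `x`, `|φ⁻¹|(y) = |φ⁻¹(y) ∩ Ch(u)|` where `u` is any vertex with `φ u = x` (for a tree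
composition this number does not depend on the choice of `u`, so it equals the `sSup` below). -/
noncomputable def typeOf (T P : FRTree) (φ : T.V → P.V) (y : P.V) : ℕ :=
  if y = P.root then 0
  else sSup {n : ℕ | ∃ u : T.V, φ u = P.parent y ∧
    n = (Finset.univ.filter (fun w => T.IsChild w u ∧ φ w = y)).card}

/-- The partition `λ^b` associated to a non-root vertex `b` of the quotient tree:
the multiset of the numbers `|φ⁻¹|(y)`, for `y` ranging over the children of `x`
with `α y = b` (where `x` is any vertex of `P` with `α x = ` parent of `b`). -/
noncomputable def assocPartition (T P Q : FRTree) (φ : T.V → P.V) (α : P.V → Q.V)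
    (x : P.V) (b : Q.V) : Multiset ℕ :=
  ((Finset.univ.filter (fun y => P.IsChild y x ∧ α y = b)).val).map (typeOf T P φ)

/-- `Λ` is the partitional labeling of the quotient tree `Q` associated to the tree
composition `φ : T → P` (with quotient map `α : P → Q`). -/
def IsAssocLabeling (T P Q : FRTree) (φ : T.V → P.V) (α : P.V → Q.V)
    (Λ : Q.V → Multiset ℕ) : Prop :=
  IsQuotient T P Q φ α ∧
  ∀ b : Q.V, b ≠ Q.root → ∀ x : P.V, α x = Q.parent b →
    Λ b = assocPartition T P Q φ α x b

/-- A partitional labeling: every non-root vertex is labeled by an integer partition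
(a multiset of positive integers). -/
def IsPartitionalLabeling (Q : FRTree) (Λ : Q.V → Multiset ℕ) : Prop :=
  ∀ a : Q.V, a ≠ Q.root → ∀ n ∈ Λ a, 0 < n

/-- Isomorphism of the restrictions of two partitional labelings to the subtrees `Q_a` and
`Q'_b`, the roots `a`, `b` being regarded as unlabeled. -/
def LabelRestrIso (Q Q' : FRTree) (Λ : Q.V → Multiset ℕ) (Ξ : Q'.V → Multiset ℕ)
    (a : Q.V) (b : Q'.V) : Prop :=
  ∃ γ : Q.V → Q'.V, IsSubtreeIso Q Q' a b γ ∧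
    ∀ c ∈ Q.Desc a, c ≠ a → Λ c = Ξ (γ c)

/-- A tree of partitions. -/
def IsTreeOfPartitions (Q : FRTree) (Λ : Q.V → Multiset ℕ) : Prop :=
  IsPartitionalLabeling Q Λ ∧
  (∀ x y y' : Q.V, Q.IsChild y x → Q.IsLeaf y → Q.IsChild y' x → Q.IsLeaf y' → y = y') ∧
  (∀ a b : Q.V, a ≠ b → Q.Internal a → Q.Internal b → Q.Siblings a b →
    ¬ LabelRestrIso Q Q Λ Λ a b)

/-- Isomorphism of partitional labelings. -/
def LabelIso (Q Q' : FRTree) (Λ : Q.V → Multiset ℕ) (Ξ : Q'.V → Multiset ℕ) : Prop :=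
  ∃ γ : Q.V → Q'.V, IsIsom Q Q' γ ∧ ∀ a : Q.V, a ≠ Q.root → Λ a = Ξ (γ a)

/-- `δ : T → Q` is a realization of the tree of partitions `(Λ, Q)` as a tree of
partitions of `T`. -/
def IsRealization (T Q : FRTree) (Λ : Q.V → Multiset ℕ) (δ : T.V → Q.V) : Prop :=
  IsComposition T Q δ ∧
  ∀ a : Q.V, Q.Internal a → ∀ u : T.V, δ u = a →
    ∑ b ∈ Q.children a, (Λ b).sum = (T.children u).card

/-- `(Λ, Q)` belongs to `Par(T)`. -/
def InParT (T Q : FRTree) (Λ : Q.V → Multiset ℕ) : Prop :=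
  IsTreeOfPartitions Q Λ ∧ ∃ δ : T.V → Q.V, IsRealization T Q Λ δ

/-- The compatibility condition on `α : P → Q` entering the definition of `Par(T, P)`:
at every vertex of `α⁻¹(a)` the numbers of children is the sum of the lengths of the
partitions labeling the children of `a`. -/
def LengthCond (P Q : FRTree) (Λ : Q.V → Multiset ℕ) (α : P.V → Q.V) : Prop :=
  ∀ a : Q.V, Q.Internal a → ∀ x : P.V, α x = a →
    ∑ b ∈ Q.children a, Multiset.card (Λ b) = (P.children x).card

/-- `(Λ, Q)` belongs to `Par(T, P)`. -/
def InParTP (T P Q : FRTree) (Λ : Q.V → Multiset ℕ) : Prop :=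
  InParT T Q Λ ∧ ∃ α : P.V → Q.V, IsComposition P Q α ∧ LengthCond P Q Λ α
/-- A common refinement of the tree compositions `φ : T → P` and `ψ : T → M`. -/
def IsCommonRefinement (T P M R : FRTree) (φ : T.V → P.V) (ψ : T.V → M.V)
    (ρ : T.V → R.V) (ϑ : R.V → P.V) (τ : R.V → M.V) : Prop :=
  IsComposition T R ρ ∧ IsComposition R P ϑ ∧ IsComposition R M τ ∧
  ϑ ∘ ρ = φ ∧ τ ∘ ρ = ψ

/-- Equivalence of the restricted common refinements `ρ_u` (of `(φ_u, ψ_u)`) and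
`ρ_v` (of `(φ_v, ψ_v)`), where `ρ u = a`, `ρ v = b`, `ϑ a = ϑ b` and `τ a = τ b`. -/
def RestrRefEquiv (T P M R : FRTree) (φ : T.V → P.V) (ψ : T.V → M.V)
    (ρ : T.V → R.V) (ϑ : R.V → P.V) (τ : R.V → M.V)
    (u v : T.V) (a b : R.V) : Prop :=
  ∃ (ζ : T.V → T.V) (γ : R.V → R.V),
    IsSubtreeIso T T u v ζ ∧ IsSubtreeIso R R a b γ ∧
    (∀ w ∈ T.Desc u, φ (ζ w) = φ w) ∧
    (∀ w ∈ T.Desc u, ψ (ζ w) = ψ w) ∧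
    (∀ w ∈ T.Desc u, ρ (ζ w) = γ (ρ w)) ∧
    (∀ r ∈ R.Desc a, ϑ (γ r) = ϑ r) ∧
    (∀ r ∈ R.Desc a, τ (γ r) = τ r)

/-- The coarseness condition for a common refinement. -/
def Coarseness (T P M R : FRTree) (φ : T.V → P.V) (ψ : T.V → M.V)
    (ρ : T.V → R.V) (ϑ : R.V → P.V) (τ : R.V → M.V) : Prop :=
  (∀ a b : R.V, a ≠ b → R.Internal a → R.Internal b → R.Siblings a b →
    ϑ a = ϑ b → τ a = τ b →
    ∀ u v : T.V, ρ u = a → ρ v = b →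
      ¬ RestrRefEquiv T P M R φ ψ ρ ϑ τ u v a b) ∧
  (∀ a b : R.V, a ≠ b → R.IsLeaf a → R.IsLeaf b → R.Siblings a b →
    ¬ (ϑ a = ϑ b ∧ τ a = τ b))

/-- Equivalence of two common refinements of the same couple `(φ, ψ)` of tree
compositions of `T`. -/
def RefEquiv (T P M R R' : FRTree) (φ : T.V → P.V) (ψ : T.V → M.V)
    (ρ : T.V → R.V) (ϑ : R.V → P.V) (τ : R.V → M.V)
    (ρ' : T.V → R'.V) (ϑ' : R'.V → P.V) (τ' : R'.V → M.V) : Prop :=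
  ∃ (ζ : T.V → T.V) (γ : R.V → R'.V),
    IsIsom T T ζ ∧ IsIsom R R' γ ∧
    φ ∘ ζ = φ ∧ ψ ∘ ζ = ψ ∧ ρ' ∘ ζ = γ ∘ ρ ∧ ϑ' ∘ γ = ϑ ∧ τ' ∘ γ = τ

/-- The orbit of the tree composition `φ` under the action `g • φ = φ ∘ g⁻¹` of `Aut T`. -/
def OrbitSet (T P : FRTree) (φ : T.V → P.V) : Type :=
  {ψ : T.V → P.V // ∃ g ∈ T.Aut, ψ = φ ∘ ⇑g⁻¹}

/-- The action of `Aut T` on the orbit of `φ`. -/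
def orbAct (T P : FRTree) (φ : T.V → P.V) (g : T.Aut)
    (ψ : OrbitSet T P φ) : OrbitSet T P φ :=
  ⟨ψ.1 ∘ ⇑((g : Equiv.Perm T.V))⁻¹, by
    obtain ⟨h, hh, hψ⟩ := ψ.2
    refine ⟨(g : Equiv.Perm T.V) * h, mul_mem g.2 hh, ?_⟩
    rw [hψ]
    funext x
    simp [Function.comp, mul_inv_rev]⟩

/-- The permutation representation `M^{|φ⁻¹|}` of `Aut T` on the (complex functions on
the) orbit of the tree composition `φ`. -/
noncomputable def permRep (T P : FRTree) (φ : T.V → P.V) :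
    Representation ℂ (T.Aut) (OrbitSet T P φ → ℂ) where
  toFun g :=
    { toFun := fun F ψ => F (orbAct T P φ g⁻¹ ψ)
      map_add' := fun _ _ => rfl
      map_smul' := fun _ _ => rfl }
  map_one' := by
    refine LinearMap.ext fun F => funext fun ψ => ?_
    show F (orbAct T P φ 1⁻¹ ψ) = F ψ
    have h : orbAct T P φ 1⁻¹ ψ = ψ := Subtype.ext (funext fun x => by simp [orbAct])
    rw [h]
  map_mul' := by
    intro a b
    refine LinearMap.ext fun F => funext fun ψ => ?_
    show F (orbAct T P φ (a * b)⁻¹ ψ) = F (orbAct T P φ b⁻¹ (orbAct T P φ a⁻¹ ψ))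
    have h : orbAct T P φ (a * b)⁻¹ ψ = orbAct T P φ b⁻¹ (orbAct T P φ a⁻¹ ψ) :=
      Subtype.ext (funext fun x => by simp [orbAct, mul_inv_rev])
    rw [h]

/-- Equivalence of two representations. -/
def RepEquiv {G : Type*} [Group G] {V W : Type*}
    [AddCommGroup V] [Module ℂ V] [AddCommGroup W] [Module ℂ W]
    (ρ : Representation ℂ G V) (σ : Representation ℂ G W) : Prop :=
  ∃ e : V ≃ₗ[ℂ] W, ∀ (g : G) (v : V), e (ρ g v) = σ g (e v)

/-- Irreducibility of a representation. -/
def IsIrreducibleRep {G V : Type*} [Group G] [AddCommGroup V] [Module ℂ V]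
    (ρ : Representation ℂ G V) : Prop :=
  (∃ v : V, v ≠ 0) ∧
  ∀ U : Submodule ℂ V, (∀ g : G, ∀ v ∈ U, ρ g v ∈ U) → U = ⊥ ∨ U = ⊤

/-- The space of equivariant linear maps between two representations; when `ρ` is
irreducible, its dimension is the multiplicity of `ρ` in `σ`. -/
def equivariantHoms {G : Type*} [Group G] {V W : Type*}
    [AddCommGroup V] [Module ℂ V] [AddCommGroup W] [Module ℂ W]
    (ρ : Representation ℂ G V) (σ : Representation ℂ G W) :
    Submodule ℂ (V →ₗ[ℂ] W) where
  carrier := {f | ∀ (g : G) (v : V), f (ρ g v) = σ g (f v)}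
  add_mem' := by
    intro a b ha hb g v
    simp [ha g v, hb g v]
  zero_mem' := by intro g v; simp
  smul_mem' := by
    intro c f hf g v
    simp [hf g v]

/-- The stabilizer `K_φ` of a tree composition `φ` in `Aut T`. -/
def stab (T P : FRTree) (φ : T.V → P.V) : Subgroup (T.Aut) where
  carrier := {g | ∀ x : T.V, φ ((g : Equiv.Perm T.V) x) = φ x}
  one_mem' := fun _ => rfl
  mul_mem' := by
    intro a b ha hb x
    simp only [Subgroup.coe_mul, Equiv.Perm.mul_apply]
    rw [ha ((b : Equiv.Perm T.V) x), hb x]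
  inv_mem' := by
    intro a ha x
    have := ha (((a : Equiv.Perm T.V))⁻¹ x)
    simp only [Equiv.Perm.coe_inv, Equiv.apply_symm_apply] at this
    simpa using this.symm

/-- The space of the representation of `G` induced by the character `χ` of the
subgroup `K`: complex functions on `G` which are `χ`-covariant for right translation
by `K`; `G` acts by left translation. -/
noncomputable def IndSpace (G : Type*) [Group G] (K : Subgroup G) (χ : K →* ℂ) :
    Submodule ℂ (G → ℂ) where
  carrier := {f | ∀ (g : G) (k : K), f (g * k) = χ k * f g}
  add_mem' := by
    intro a b ha hb g k
    simp only [Pi.add_apply, ha g k, hb g k]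
    ring
  zero_mem' := by intro g k; simp
  smul_mem' := by
    intro c f hf g k
    simp only [Pi.smul_apply, smul_eq_mul, hf g k]
    ring

/-- The representation of `G` induced by the character `χ` of the subgroup `K`. -/
noncomputable def indRep (G : Type*) [Group G] (K : Subgroup G) (χ : K →* ℂ) :
    Representation ℂ G (IndSpace G K χ) where
  toFun g :=
    { toFun := fun f => ⟨fun x => (f : G → ℂ) (g⁻¹ * x), by
        intro x k
        have h := f.2 (g⁻¹ * x) k
        simpa [mul_assoc] using h⟩
      map_add' := by intro a b; apply Subtype.ext; funext x; rfl
      map_smul' := by intro c a; apply Subtype.ext; funext x; rfl }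
  map_one' := by
    refine LinearMap.ext fun f => Subtype.ext (funext fun x => ?_)
    simp
  map_mul' := by
    intro a b
    refine LinearMap.ext fun f => Subtype.ext (funext fun x => ?_)
    simp [mul_assoc]

/-- A sibling swap: an automorphism of order two exchanging the subtrees rooted at two
distinct siblings `u`, `v` and fixing everything else.  The sign representation of
`Aut T` is the unique homomorphism `Aut T →* ℂ` taking the value `-1` at every
sibling swap. -/
def IsSiblingSwap (T : FRTree) (g : Equiv.Perm T.V) : Prop :=
  ∃ u v : T.V, u ≠ v ∧ T.Siblings u v ∧ g u = v ∧
    (∀ w : T.V, w ∉ T.Desc u → w ∉ T.Desc v → g w = w) ∧ g * g = 1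

/-- The conjugate (transpose) of an integer partition, encoded as a multiset. -/
def conjP (m : Multiset ℕ) : Multiset ℕ :=
  ((Multiset.range m.sum).map fun i => Multiset.card (m.filter fun p => i < p)).filter
    fun n => 0 < n

/-- Two tree compositions of the same tree have `0-1` intersection. -/
def ZeroOneIntersection (T P M : FRTree) (φ : T.V → P.V) (ψ : T.V → M.V) : Prop :=
  ∀ v : T.V, T.Internal v → ∀ x : P.V, ∀ y : M.V,
    P.IsChild x (φ v) → M.IsChild y (ψ v) →
    {w : T.V | φ w = x ∧ ψ w = y}.Subsingleton

/-- `φᵗ : T → Pᵗ` (with quotient `αᵗ`) is a transpose of the tree composition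
`φ : T → P` with quotient `α : P → Q` and associated tree of partitions `Λ`. -/
def IsTranspose (T P Q Pt : FRTree) (φ : T.V → P.V) (α : P.V → Q.V)
    (Λ : Q.V → Multiset ℕ) (φt : T.V → Pt.V) (αt : Pt.V → Q.V) : Prop :=
  IsComposition T Pt φt ∧
  IsAssocLabeling T Pt Q φt αt (fun a => conjP (Λ a)) ∧
  (αt ∘ φt = α ∘ φ) ∧
  ZeroOneIntersection T P Pt φ φt

set_option synthInstance.maxHeartbeats 400000 in
/-- The multiplicity of the irreducible representation `ρ` inside `σ`: the dimension of
the space of equivariant linear maps. -/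
noncomputable def repMultiplicity {G : Type*} [Group G] {V W : Type*}
    [AddCommGroup V] [Module ℂ V] [AddCommGroup W] [Module ℂ W]
    (ρ : Representation ℂ G V) (σ : Representation ℂ G W) : ℕ :=
  Module.finrank ℂ ↥(equivariantHoms ρ σ)

/-!
If `τ` maps the `⟨g⟩`-orbits onto the `⟨g'⟩`-orbits, then `τ g τ⁻¹` and `g'` have the same
cycles, so it suffices to conjugate two automorphisms `g`, `g'` with the same cycles. A
conjugator `t` sending each vertex into its own `g'`-cycle is built from the root down: if `r`
is the chosen representative of a cycle of `g` and `t (parent r) = (g' ^ e) (parent r)`, put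
`t ((g ^ i) r) = (g' ^ i) ((g' ^ e) r)`. This is well defined because every vertex has the same
period under `g` and `g'`; it commutes with `parent` and with `g ↦ g'`, and it is injective
because it preserves `g'`-cycles and periods.
-/
namespace Equiv.Perm

variable {α : Type*} {f f' : Perm α} {x y : α}

theorem sameCycle_iff_exists_nat_pow_eq [Finite α] :
    f.SameCycle x y ↔ ∃ n : ℕ, (f ^ n) x = y :=
  ⟨SameCycle.exists_nat_pow_eq, fun ⟨n, hn⟩ => ⟨n, by rwa [zpow_natCast]⟩⟩

theorem minimalPeriod_eq_natCard_sameCycle [Finite α] (f : Perm α) (x : α) :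
    minimalPeriod f x = Nat.card {y // f.SameCycle x y} := by
  classical
  have := Fintype.ofFinite α
  rw [show (⇑f : α → α) = (f • ·) from rfl, MulAction.minimalPeriod_eq_card,
    ← Nat.card_eq_fintype_card]
  refine Nat.card_congr (Equiv.subtypeEquivRight fun y => ?_)
  rw [MulAction.mem_orbit_iff]
  constructor
  · rintro ⟨⟨_, i, rfl⟩, rfl⟩
    exact ⟨i, rfl⟩
  · rintro ⟨i, rfl⟩
    exact ⟨⟨f ^ i, i, rfl⟩, rfl⟩

theorem SameCycle.minimalPeriod_eq [Finite α] (h : f.SameCycle x y) :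
    minimalPeriod f x = minimalPeriod f y := by
  simp only [minimalPeriod_eq_natCard_sameCycle]
  exact Nat.card_congr (Equiv.subtypeEquivRight fun z => ⟨h.symm.trans, h.trans⟩)

theorem minimalPeriod_eq_of_sameCycle_iff [Finite α]
    (h : ∀ y, f.SameCycle x y ↔ f'.SameCycle x y) :
    minimalPeriod f x = minimalPeriod f' x := by
  simp only [minimalPeriod_eq_natCard_sameCycle]
  exact Nat.card_congr (Equiv.subtypeEquivRight h)

theorem zpow_apply_eq_zpow_apply_iff (f : Perm α) (x : α) (i j : ℤ) :
    (f ^ i) x = (f ^ j) x ↔ (minimalPeriod f x : ℤ) ∣ i - j := by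
  rw [show (⇑f : α → α) = (f • ·) from rfl, ← MulAction.zpow_smul_eq_iff_minimalPeriod_dvd,
    Perm.smul_def, ← add_sub_cancel j i, zpow_add, Perm.mul_apply, add_sub_cancel_left]
  exact (f ^ j).injective.eq_iff

theorem zpow_apply_eq_zpow_apply_of_minimalPeriod_eq {β : Type*} {g : Perm β} {y : β}
    (hp : minimalPeriod f x = minimalPeriod g y) {i j : ℤ}
    (h : (f ^ i) x = (f ^ j) x) : (g ^ i) y = (g ^ j) y := by
  rwa [zpow_apply_eq_zpow_apply_iff, ← hp, ← zpow_apply_eq_zpow_apply_iff]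

theorem semiconj_zpow {β : Type*} {t : α → β} {g : Perm β} (h : Semiconj t f g)
    (i : ℤ) : Semiconj t ⇑(f ^ i) ⇑(g ^ i) := by
  induction i using Int.induction_on with
  | zero => exact Semiconj.id_right
  | succ i ih =>
    rw [zpow_add_one, zpow_add_one, coe_mul, coe_mul]
    exact ih.comp_right h
  | pred i ih =>
    rw [zpow_sub_one, zpow_sub_one, coe_mul, coe_mul]
    exact ih.comp_right (h.inverses_right f.apply_symm_apply g.symm_apply_apply)

noncomputable def cycleRep (f : Perm α) (x : α) : α :=
  (Quotient.mk (SameCycle.setoid f) x).out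

theorem sameCycle_cycleRep (f : Perm α) (x : α) : f.SameCycle (f.cycleRep x) x :=
  Quotient.mk_out (s := SameCycle.setoid f) x

theorem cycleRep_apply (f : Perm α) (x : α) : f.cycleRep (f x) = f.cycleRep x :=
  congrArg Quotient.out (Quotient.sound (sameCycle_apply_left.2 (SameCycle.refl f x)))

/-- An exponent `i` with `(f ^ i) x = y`; a junk value unless `f.SameCycle x y`. -/
noncomputable def cycleExponent (f : Perm α) (x y : α) : ℤ :=
  Classical.epsilon fun i : ℤ => (f ^ i) x = y

theorem SameCycle.zpow_cycleExponent_apply (h : f.SameCycle x y) :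
    (f ^ f.cycleExponent x y) x = y :=
  Classical.epsilon_spec h

end Equiv.Perm

namespace FRTree

variable {T : FRTree} {a : Equiv.Perm T.V} {v : T.V}

def depth (T : FRTree) (v : T.V) : ℕ := Nat.find (T.reaches_root v)

theorem depth_eq_zero : T.depth v = 0 ↔ v = T.root :=
  Nat.find_eq_zero _

theorem depth_parent_add_one (hv : v ≠ T.root) : T.depth (T.parent v) + 1 = T.depth v :=
  (Nat.find_comp_succ (T.reaches_root v) (T.reaches_root (T.parent v)) hv).symm

theorem parent_apply_of_mem_aut (ha : a ∈ T.Aut) (v : T.V) :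
    T.parent (a v) = a (T.parent v) := by
  by_cases hv : v = T.root
  · rw [hv, ha.1, T.parent_root, ha.1]
  · exact (ha.2 v hv).2

theorem depth_apply_of_mem_aut (ha : a ∈ T.Aut) (v : T.V) : T.depth (a v) = T.depth v := by
  refine Nat.find_congr' fun {n} => ?_
  rw [(Function.Commute.iterate_left (f := T.parent) (parent_apply_of_mem_aut ha) n).eq v,
    a.injective.eq_iff' ha.1]

theorem eq_root_iff_of_sameCycle (ha : a ∈ T.Aut) {x y : T.V} (h : a.SameCycle x y) :
    x = T.root ↔ y = T.root := by
  obtain ⟨i, rfl⟩ := h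
  exact ((a ^ i).injective.eq_iff' (zpow_mem ha i).1).symm

theorem depth_eq_of_sameCycle (ha : a ∈ T.Aut) {x y : T.V} (h : a.SameCycle x y) :
    T.depth x = T.depth y := by
  obtain ⟨i, rfl⟩ := h
  exact (depth_apply_of_mem_aut (zpow_mem ha i) x).symm

end FRTree

section Conjugator

open Equiv.Perm FRTree

variable {T : FRTree} (g g' : Equiv.Perm T.V)

/-- The depth of `v` serves as fuel. With `r = g.cycleRep v`, the exponent is chosen so that
`conjugator g g' v = (g' ^ i) ((g' ^ e) r)`, where `(g ^ i) r = v` and `e` is the exponent of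
`parent r`. -/
noncomputable def conjExponentAux : ℕ → T.V → ℤ
  | 0, _ => 0
  | n + 1, v => g.cycleExponent (g.cycleRep v) v +
      conjExponentAux n (T.parent (g.cycleRep v)) - g'.cycleExponent (g.cycleRep v) v

noncomputable def conjExponent (v : T.V) : ℤ := conjExponentAux g g' (T.depth v) v

noncomputable def conjugator (v : T.V) : T.V := (g' ^ conjExponent g g' v) v

theorem conjugator_root : conjugator g g' T.root = T.root := by
  rw [conjugator, conjExponent, depth_eq_zero.2 rfl, conjExponentAux, zpow_zero, one_apply]

theorem sameCycle_conjugator (v : T.V) : g'.SameCycle v (conjugator g g' v) := ⟨_, rfl⟩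

variable {g g'}

theorem conjExponent_of_ne_root (hg : g ∈ T.Aut) {v : T.V} (hv : v ≠ T.root) :
    conjExponent g g' v = g.cycleExponent (g.cycleRep v) v +
      conjExponent g g' (T.parent (g.cycleRep v)) - g'.cycleExponent (g.cycleRep v) v := by
  have hrep := sameCycle_cycleRep g v
  have hdepth : T.depth v = T.depth (T.parent (g.cycleRep v)) + 1 := by
    rw [depth_parent_add_one ((eq_root_iff_of_sameCycle hg hrep).not.2 hv),
      depth_eq_of_sameCycle hg hrep]
  rw [conjExponent, hdepth, conjExponentAux, conjExponent]

theorem conjugator_eq_zpow_apply (hg : g ∈ T.Aut)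
    (hcyc : ∀ x y, g.SameCycle x y ↔ g'.SameCycle x y) {v : T.V} (hv : v ≠ T.root) {i : ℤ}
    (hi : (g ^ i) (g.cycleRep v) = v) :
    conjugator g g' v =
      (g' ^ i) ((g' ^ conjExponent g g' (T.parent (g.cycleRep v))) (g.cycleRep v)) := by
  set r := g.cycleRep v
  set e := conjExponent g g' (T.parent r)
  have hj := (sameCycle_cycleRep g v).zpow_cycleExponent_apply
  have hk := ((hcyc _ _).1 (sameCycle_cycleRep g v)).zpow_cycleExponent_apply
  have hp : minimalPeriod g r = minimalPeriod g' ((g' ^ e) r) :=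
    (minimalPeriod_eq_of_sameCycle_iff (hcyc r)).trans (SameCycle.minimalPeriod_eq ⟨e, rfl⟩)
  calc conjugator g g' v
      = (g' ^ (g.cycleExponent r v + e - g'.cycleExponent r v))
          ((g' ^ g'.cycleExponent r v) r) := by
        rw [hk, conjugator, conjExponent_of_ne_root hg hv]
    _ = (g' ^ g.cycleExponent r v) ((g' ^ e) r) := by
        rw [← mul_apply, ← zpow_add, sub_add_cancel, zpow_add, mul_apply]
    _ = (g' ^ i) ((g' ^ e) r) :=
        zpow_apply_eq_zpow_apply_of_minimalPeriod_eq hp (hj.trans hi.symm)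

variable (hg : g ∈ T.Aut) (hg' : g' ∈ T.Aut) (hcyc : ∀ x y, g.SameCycle x y ↔ g'.SameCycle x y)
include hg hg' hcyc

theorem conjugator_apply (v : T.V) : conjugator g g' (g v) = g' (conjugator g g' v) := by
  by_cases hv : v = T.root
  · rw [hv, hg.1, conjugator_root, hg'.1]
  have hj := (sameCycle_cycleRep g v).zpow_cycleExponent_apply
  have hj' : (g ^ (1 + g.cycleExponent (g.cycleRep v) v)) (g.cycleRep (g v)) = g v := by
    rw [cycleRep_apply, zpow_one_add, mul_apply, hj]
  rw [conjugator_eq_zpow_apply hg hcyc (hg.2 v hv).1 hj', conjugator_eq_zpow_apply hg hcyc hv hj,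
    cycleRep_apply, zpow_one_add, mul_apply]

theorem parent_conjugator (v : T.V) :
    T.parent (conjugator g g' v) = conjugator g g' (T.parent v) := by
  by_cases hv : v = T.root
  · rw [hv, conjugator_root, T.parent_root, conjugator_root]
  set r := g.cycleRep v
  set j := g.cycleExponent r v
  have hj : (g ^ j) r = v := (sameCycle_cycleRep g v).zpow_cycleExponent_apply
  calc T.parent (conjugator g g' v)
      = T.parent ((g' ^ j) ((g' ^ conjExponent g g' (T.parent r)) r)) := by
        rw [conjugator_eq_zpow_apply hg hcyc hv hj]
    _ = (g' ^ j) (conjugator g g' (T.parent r)) := by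
        rw [parent_apply_of_mem_aut (zpow_mem hg' _), parent_apply_of_mem_aut (zpow_mem hg' _)]
        rfl
    _ = conjugator g g' ((g ^ j) (T.parent r)) :=
        ((semiconj_zpow (conjugator_apply hg hg' hcyc) j).eq _).symm
    _ = conjugator g g' (T.parent v) := by rw [← parent_apply_of_mem_aut (zpow_mem hg j), hj]

theorem conjugator_injective : Injective (conjugator g g') := by
  intro u v huv
  have hsame : g.SameCycle u v := (hcyc u v).2 <|
    (sameCycle_conjugator g g' u).trans (huv ▸ (sameCycle_conjugator g g' v).symm)
  obtain ⟨i, rfl⟩ := hsame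
  have hfix : (g' ^ i) (conjugator g g' u) = (g' ^ (0 : ℤ)) (conjugator g g' u) := by
    rw [← (semiconj_zpow (conjugator_apply hg hg' hcyc) i).eq, ← huv, zpow_zero, one_apply]
  have hp : minimalPeriod g' (conjugator g g' u) = minimalPeriod g u :=
    (sameCycle_conjugator g g' u).minimalPeriod_eq.symm.trans
      (minimalPeriod_eq_of_sameCycle_iff (hcyc u)).symm
  rw [zpow_apply_eq_zpow_apply_of_minimalPeriod_eq hp hfix, zpow_zero, one_apply]

theorem exists_conj_eq_of_sameCycle_iff : ∃ t ∈ T.Aut, t * g * t⁻¹ = g' := by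
  have hinj := conjugator_injective hg hg' hcyc
  set t := Equiv.ofBijective _ (Finite.injective_iff_bijective.1 hinj)
  refine ⟨t, ⟨conjugator_root g g', fun v hv => ⟨?_, parent_conjugator hg hg' hcyc v⟩⟩, ?_⟩
  · rw [← conjugator_root g g']
    exact hinj.ne hv
  · rw [mul_inv_eq_iff_eq_mul]
    ext v
    exact conjugator_apply hg hg' hcyc v

end Conjugator

/-- **Theorem.**  Two automorphisms `g, g'` of `T` are conjugate in `Aut T` if and only
if the associated orbit tree compositions `φ^g` and `φ^{g'}` are equivalent, i.e. there
is an automorphism `τ` of `T` matching the `⟨g⟩`-orbits with the `⟨g'⟩`-orbits. -/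
theorem conjugate_iff_orbit_compositions_equivalent
    (T : FRTree) (g g' : Equiv.Perm T.V) (hg : g ∈ T.Aut) (hg' : g' ∈ T.Aut) :
    (∃ t ∈ T.Aut, t * g * t⁻¹ = g') ↔
      ∃ τ ∈ T.Aut, ∀ u v : T.V,
        ((∃ n : ℕ, (g ^ n) u = v) ↔ ∃ n : ℕ, (g' ^ n) (τ u) = τ v) := by
  simp_rw [← Equiv.Perm.sameCycle_iff_exists_nat_pow_eq]
  constructor
  · rintro ⟨t, ht, rfl⟩
    exact ⟨t, ht, fun u v => by
      simp only [Equiv.Perm.sameCycle_conj, Equiv.Perm.coe_inv, Equiv.symm_apply_apply]⟩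
  · rintro ⟨τ, hτ, horb⟩
    have hcyc : ∀ x y, (τ * g * τ⁻¹).SameCycle x y ↔ g'.SameCycle x y := fun x y => by
      simp only [Equiv.Perm.sameCycle_conj, horb, Equiv.Perm.coe_inv, Equiv.apply_symm_apply]
    obtain ⟨t, ht, hconj⟩ :=
      exists_conj_eq_of_sameCycle_iff (mul_mem (mul_mem hτ hg) (inv_mem hτ)) hg' hcyc
    exact ⟨t * τ, mul_mem ht hτ, by rw [← hconj]; group⟩
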